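/- A non-degenerate binary constraint f = (a,b,c,d) over ℂ whose underlying relation is neither in DISJ nor in NAND must have one of the following forms: (0,b,c,0) with bc ≠ 0; (a,0,0,d) with ad ≠ 0; (a,0,c,d) with acd ≠ 0; (a,b,0,d) with abd ≠ 0; or (a,b,c,d) with abcd ≠ 0 and ad ≠ bc. -/

import Mathlib

/-- A factor over variables `x₁,…,x_k`: `Δ_c(x_i)`, an `OR` over a set of
variables, or a `NAND` over a set of variables. -/
inductive GFactor (k : ℕ) where
  | delta : Bool → Fin k → GFactor k
  | orf : Finset (Fin k) → GFactor k
  | nandf : Finset (Fin k) → GFactor k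
  deriving DecidableEq

/-- Evaluation of a factor. -/
def GFactor.eval {k : ℕ} : GFactor k → (Fin k → Bool) → Prop
  | .delta c i, x => x i = c
  | .orf s, x => ∃ i ∈ s, x i = true
  | .nandf s, x => ∃ i ∈ s, x i = false

/-- The relation defined by a factor list. -/
def holdsList {k : ℕ} (L : Finset (GFactor k)) (x : Fin k → Bool) : Prop :=
  ∀ p ∈ L, p.eval x

/-- `R ∈ DISJ`: `R` is a product of a positive number of factors of the forms
`Δ₀`, `Δ₁`, and `OR`s of arity at least `2`. -/
def InDISJ {k : ℕ} (R : (Fin k → Bool) → Prop) : Prop :=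
  ∃ L : Finset (GFactor k), L.Nonempty ∧
    (∀ s : Finset (Fin k), GFactor.nandf s ∉ L) ∧
    (∀ s : Finset (Fin k), GFactor.orf s ∈ L → 2 ≤ s.card) ∧
    ∀ x, R x ↔ holdsList L x

/-- `R ∈ NAND`: `R` is a product of a positive number of factors of the forms
`Δ₀`, `Δ₁`, and `NAND`s of arity at least `2`. -/
def InNAND {k : ℕ} (R : (Fin k → Bool) → Prop) : Prop :=
  ∃ L : Finset (GFactor k), L.Nonempty ∧
    (∀ s : Finset (Fin k), GFactor.orf s ∉ L) ∧
    (∀ s : Finset (Fin k), GFactor.nandf s ∈ L → 2 ≤ s.card) ∧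
    ∀ x, R x ↔ holdsList L x

/-! A binary constraint `f` with `f 0 0 * f 1 1 = f 0 1 * f 1 0` is a product `u x * v y`, so
non-degeneracy means `ad ≠ bc`. Sorting the supports of such `f` by which of `a, b, c, d` vanish,
the only ones not among the five forms are `a = 0` with `b, c, d ≠ 0`, whose support is `OR₂`,
and `d = 0` with `a, b, c ≠ 0`, whose support is `NAND₂`. -/

theorem exists_eq_mul_of_mul_eq_mul {K : Type*} [Field K] (f : Bool → Bool → K)
    (h : f false false * f true true = f false true * f true false) :
    ∃ u v : Bool → K, ∀ x y, f x y = u x * v y := by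
  by_cases h00 : f false false = 0
  · have h0 : f false true * f true false = 0 := by rw [← h, h00, zero_mul]
    rcases mul_eq_zero.1 h0 with h01 | h10
    · refine ⟨fun x => if x then 1 else 0, f true, ?_⟩
      intro x y; cases x <;> cases y <;> simp [h00, h01]
    · refine ⟨fun x => f x true, fun y => if y then 1 else 0, ?_⟩
      intro x y; cases x <;> cases y <;> simp [h00, h10]
  · refine ⟨fun x => f x false, fun y => f false y / f false false, ?_⟩
    intro x y
    cases x <;> cases y <;> field_simp
    rw [mul_comm, h, mul_comm]

theorem inDISJ_exists_eq_true {k : ℕ} (hk : 2 ≤ k) :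
    InDISJ (fun x : Fin k → Bool => ∃ i, x i = true) :=
  ⟨{.orf .univ}, Finset.singleton_nonempty _, by simp, by simpa using hk,
    by simp [holdsList, GFactor.eval]⟩

theorem inNAND_exists_eq_false {k : ℕ} (hk : 2 ≤ k) :
    InNAND (fun x : Fin k → Bool => ∃ i, x i = false) :=
  ⟨{.nandf .univ}, Finset.singleton_nonempty _, by simp, by simpa using hk,
    by simp [holdsList, GFactor.eval]⟩

section BinarySupport

variable {M : Type*} [Zero M] (f : Bool → Bool → M)

theorem support_eq_exists_eq_true (h00 : f false false = 0) (h01 : f false true ≠ 0)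
    (h10 : f true false ≠ 0) (h11 : f true true ≠ 0) :
    (fun x : Fin 2 → Bool => f (x 0) (x 1) ≠ 0) = fun x => ∃ i, x i = true := by
  funext x
  simp only [Fin.exists_fin_two, eq_iff_iff]
  cases x 0 <;> cases x 1 <;> simp [*]

theorem support_eq_exists_eq_false (h00 : f false false ≠ 0) (h01 : f false true ≠ 0)
    (h10 : f true false ≠ 0) (h11 : f true true = 0) :
    (fun x : Fin 2 → Bool => f (x 0) (x 1) ≠ 0) = fun x => ∃ i, x i = false := by
  funext x
  simp only [Fin.exists_fin_two, eq_iff_iff]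
  cases x 0 <;> cases x 1 <;> simp [*]

end BinarySupport

/-- A non-degenerate binary constraint `f = (a,b,c,d)` whose underlying
relation lies neither in `DISJ` nor in `NAND` has one of the five listed
forms. -/
theorem stmt17 (f : Bool → Bool → ℂ) (a b c d : ℂ)
    (h00 : f false false = a) (h01 : f false true = b)
    (h10 : f true false = c) (h11 : f true true = d)
    (hnd : ¬ ∃ u v : Bool → ℂ, ∀ x y, f x y = u x * v y)
    (hdisj : ¬ InDISJ (fun x : Fin 2 → Bool => f (x 0) (x 1) ≠ 0))
    (hnand : ¬ InNAND (fun x : Fin 2 → Bool => f (x 0) (x 1) ≠ 0)) :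
    (a = 0 ∧ d = 0 ∧ b * c ≠ 0) ∨
    (b = 0 ∧ c = 0 ∧ a * d ≠ 0) ∨
    (b = 0 ∧ a * c * d ≠ 0) ∨
    (c = 0 ∧ a * b * d ≠ 0) ∨
    (a * b * c * d ≠ 0 ∧ a * d ≠ b * c) := by
  subst h00 h01 h10 h11
  have hdet : f false false * f true true ≠ f false true * f true false :=
    fun h => hnd (exists_eq_mul_of_mul_eq_mul f h)
  have not_or_support : ¬ (f false false = 0 ∧ f false true ≠ 0 ∧ f true false ≠ 0 ∧ f true true ≠ 0) :=
    fun ⟨ha, hb, hc, hd⟩ => hdisj <|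
      support_eq_exists_eq_true f ha hb hc hd ▸ inDISJ_exists_eq_true le_rfl
  have not_nand_support : ¬ (f false false ≠ 0 ∧ f false true ≠ 0 ∧ f true false ≠ 0 ∧ f true true = 0) :=
    fun ⟨ha, hb, hc, hd⟩ => hnand <|
      support_eq_exists_eq_false f ha hb hc hd ▸ inNAND_exists_eq_false le_rfl
  by_cases ha : f false false = 0 <;> by_cases hb : f false true = 0 <;>
    by_cases hc : f true false = 0 <;> by_cases hd : f true true = 0 <;> simp_all
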